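/- With V, J, K as above, if Z and Z' are linearly independent vectors in V, then K(Z,Z') ≠ 0 as an endomorphism of V. Consequently, if Z ≠ 0 satisfies (R + 4BK)(X,Y)Z = 0 for all X,Y and Z' ≠ 0 satisfies (R + 4B'K)(X,Y)Z' = 0 for all X,Y, where R is any algebraic curvature tensor, then B = B'. -/

import Mathlib

/-!
For `K = chscK J`, the quantity `⟪K(W,U)U, W⟫ = (‖U‖²‖W‖² - ⟪W,U⟫² + 3⟪W,JU⟫²)/4` is symmetric
in `W, U` and, by the strict Cauchy–Schwarz inequality, positive on linearly independent pairs;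
in particular `K(W,U) ≠ 0`. If `Z` lies in the `B`-nullity space of `R`, pairing
`(R + 4BK)(W,Z)Z = 0` with `W` gives `⟪R(W,Z)Z, W⟫ = -4B⟪K(W,Z)Z, W⟫`. For independent `Z, Z'`
the pair symmetry of `R` then forces `B = B'`; for dependent ones `Z` lies in both nullity
spaces, and testing against the independent pair `JZ, Z` gives `B = B'`.
-/

/-- The constant holomorphic sectional curvature algebraic curvature tensor. -/
noncomputable def chscK {V : Type*} [NormedAddCommGroup V] [InnerProductSpace ℝ V]
    (J : V →ₗ[ℝ] V) (X Y W : V) : V :=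
  (1 / 4 : ℝ) • ((inner ℝ Y W : ℝ) • X - (inner ℝ X W : ℝ) • Y
    + (inner ℝ (J Y) W : ℝ) • J X - (inner ℝ (J X) W : ℝ) • J Y
    + (2 * (inner ℝ X (J Y) : ℝ)) • J W)

open RealInnerProductSpace

section CauchySchwarz

variable {F : Type*} [NormedAddCommGroup F] [InnerProductSpace ℝ F]

theorem real_inner_sq_lt_of_linearIndependent {x y : F} (h : LinearIndependent ℝ ![x, y]) :
    ⟪x, y⟫ ^ 2 < ⟪x, x⟫ * ⟪y, y⟫ := by
  have hx : x ≠ 0 := by simpa using h.ne_zero 0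
  have hy : y ≠ 0 := by simpa using h.ne_zero 1
  have hne : ‖⟪x, y⟫‖ ≠ ‖x‖ * ‖y‖ := by
    rw [Ne, norm_inner_eq_norm_iff hx hy]
    rintro ⟨r, -, rfl⟩
    exact (LinearIndependent.pair_iff' hx).1 h r rfl
  have hlt := pow_lt_pow_left₀ ((norm_inner_le_norm x y).lt_of_ne hne) (norm_nonneg _)
    two_ne_zero
  rwa [Real.norm_eq_abs, sq_abs, mul_pow, ← real_inner_self_eq_norm_sq,
    ← real_inner_self_eq_norm_sq] at hlt

end CauchySchwarz

section Kaehler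

variable {V : Type*} [NormedAddCommGroup V] [InnerProductSpace ℝ V] {J : V →ₗ[ℝ] V}

theorem chscK_smul_right (X Y W : V) (a : ℝ) :
    chscK J X Y (a • W) = a • chscK J X Y W := by
  simp only [chscK, inner_smul_right, map_smul]
  module

theorem linearIndependent_apply_self (hJ2 : ∀ X, J (J X) = -X) {Z : V} (hZ : Z ≠ 0) :
    LinearIndependent ℝ ![J Z, Z] := by
  rw [LinearIndependent.pair_symm_iff, LinearIndependent.pair_iff' hZ]
  intro a ha
  have : (a * a + 1) • Z = 0 := by
    rw [add_smul, one_smul, mul_smul, ha, ← map_smul, ha, hJ2, neg_add_cancel]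
  have ha2 : a * a + 1 ≠ 0 := (add_pos_of_nonneg_of_pos (mul_self_nonneg a) one_pos).ne'
  exact hZ ((smul_eq_zero.1 this).resolve_left ha2)

theorem real_inner_apply_left_eq_neg (hJ2 : ∀ X, J (J X) = -X)
    (hJg : ∀ X Y : V, ⟪J X, J Y⟫ = ⟪X, Y⟫) (X Y : V) : ⟪J X, Y⟫ = -⟪X, J Y⟫ := by
  rw [← hJg X (J Y), hJ2, inner_neg_right, neg_neg]

theorem real_inner_chscK_self (hJ2 : ∀ X, J (J X) = -X)
    (hJg : ∀ X Y : V, ⟪J X, J Y⟫ = ⟪X, Y⟫) (W U : V) :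
    ⟪chscK J W U U, W⟫ = (⟪U, U⟫ * ⟪W, W⟫ - ⟪W, U⟫ ^ 2 + 3 * ⟪W, J U⟫ ^ 2) / 4 := by
  have hJUU : ⟪J U, U⟫ = 0 := by
    have := real_inner_apply_left_eq_neg hJ2 hJg U U
    rw [real_inner_comm (J U) U] at this
    linarith
  simp only [chscK, real_inner_smul_left, inner_add_left, inner_sub_left]
  rw [hJUU, real_inner_comm U W, real_inner_apply_left_eq_neg hJ2 hJg W U, real_inner_comm (J U) W]
  ring

theorem real_inner_chscK_self_comm (hJ2 : ∀ X, J (J X) = -X)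
    (hJg : ∀ X Y : V, ⟪J X, J Y⟫ = ⟪X, Y⟫) (W U : V) :
    ⟪chscK J W U U, W⟫ = ⟪chscK J U W W, U⟫ := by
  have hJ : ⟪U, J W⟫ = -⟪W, J U⟫ := by
    rw [real_inner_comm, real_inner_apply_left_eq_neg hJ2 hJg]
  rw [real_inner_chscK_self hJ2 hJg, real_inner_chscK_self hJ2 hJg, hJ, real_inner_comm U W]
  ring

theorem real_inner_chscK_self_pos (hJ2 : ∀ X, J (J X) = -X)
    (hJg : ∀ X Y : V, ⟪J X, J Y⟫ = ⟪X, Y⟫) {W U : V} (h : LinearIndependent ℝ ![W, U]) :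
    0 < ⟪chscK J W U U, W⟫ := by
  rw [real_inner_chscK_self hJ2 hJg]
  nlinarith [real_inner_sq_lt_of_linearIndependent h, sq_nonneg ⟪W, J U⟫]

theorem chscK_ne_zero (hJ2 : ∀ X, J (J X) = -X)
    (hJg : ∀ X Y : V, ⟪J X, J Y⟫ = ⟪X, Y⟫) {W U : V} (h : LinearIndependent ℝ ![W, U]) :
    chscK J W U U ≠ 0 := fun h0 => by
  simpa [h0] using real_inner_chscK_self_pos hJ2 hJg h

end Kaehler

section Nullity

variable {V : Type*} [NormedAddCommGroup V] [InnerProductSpace ℝ V] {J : V →ₗ[ℝ] V}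
  {R : V →ₗ[ℝ] V →ₗ[ℝ] V →ₗ[ℝ] V} {B B' : ℝ} {Z Z' : V}

/-- `Z` lies in the `B`-nullity space `N(B)` of `R`. -/
def IsBNull (R : V →ₗ[ℝ] V →ₗ[ℝ] V →ₗ[ℝ] V) (J : V →ₗ[ℝ] V) (B : ℝ) (Z : V) : Prop :=
  ∀ X Y : V, R X Y Z + (4 * B) • chscK J X Y Z = 0

theorem IsBNull.of_smul {a : ℝ} (ha : a ≠ 0) (h : IsBNull R J B (a • Z)) : IsBNull R J B Z := by
  intro X Y
  have hXY := h X Y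
  rw [map_smul, chscK_smul_right, smul_comm (4 * B), ← smul_add] at hXY
  exact (smul_eq_zero.1 hXY).resolve_left ha

theorem IsBNull.real_inner_apply_self (h : IsBNull R J B Z) (W : V) :
    ⟪R W Z Z, W⟫ = -(4 * B * ⟪chscK J W Z Z, W⟫) := by
  have := congrArg (⟪·, W⟫) (h W Z)
  simp only [inner_add_left, real_inner_smul_left, inner_zero_left] at this
  linarith

theorem IsBNull.eq_of_self (hJ2 : ∀ X, J (J X) = -X) (hJg : ∀ X Y : V, ⟪J X, J Y⟫ = ⟪X, Y⟫)
    (hZ : Z ≠ 0) (h : IsBNull R J B Z) (h' : IsBNull R J B' Z) : B = B' := by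
  have hpos := real_inner_chscK_self_pos hJ2 hJg (linearIndependent_apply_self hJ2 hZ)
  have := (h.real_inner_apply_self (J Z)).symm.trans (h'.real_inner_apply_self (J Z))
  nlinarith

theorem IsBNull.eq_of_linearIndependent (hJ2 : ∀ X, J (J X) = -X)
    (hJg : ∀ X Y : V, ⟪J X, J Y⟫ = ⟪X, Y⟫)
    (hRpair : ∀ X Y Z W : V, ⟪R X Y Z, W⟫ = ⟪R Z W X, Y⟫)
    (hind : LinearIndependent ℝ ![Z', Z]) (h : IsBNull R J B Z) (h' : IsBNull R J B' Z') :
    B = B' := by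
  have hpos := real_inner_chscK_self_pos hJ2 hJg hind
  have e := h.real_inner_apply_self Z'
  have e' := h'.real_inner_apply_self Z
  rw [hRpair, ← real_inner_chscK_self_comm hJ2 hJg] at e'
  nlinarith

end Nullity

theorem stmt1_general {V : Type*} [NormedAddCommGroup V] [InnerProductSpace ℝ V]
    (J : V →ₗ[ℝ] V) (hJ2 : ∀ X, J (J X) = -X)
    (hJg : ∀ X Y : V, (inner ℝ (J X) (J Y) : ℝ) = inner ℝ X Y)
    (R : V →ₗ[ℝ] V →ₗ[ℝ] V →ₗ[ℝ] V)
    (hRpair : ∀ X Y Z W : V, (inner ℝ (R X Y Z) W : ℝ) = inner ℝ (R Z W X) Y)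
    (B B' : ℝ) (Z Z' : V) (hZ : Z ≠ 0) (hZ' : Z' ≠ 0)
    (hN : ∀ X Y : V, R X Y Z + (4 * B) • chscK J X Y Z = 0)
    (hN' : ∀ X Y : V, R X Y Z' + (4 * B') • chscK J X Y Z' = 0) :
    (∀ W W' : V, LinearIndependent ℝ ![W, W'] → ∃ U, chscK J W W' U ≠ 0) ∧ B = B' := by
  refine ⟨fun W W' h => ⟨W', chscK_ne_zero hJ2 hJg h⟩, ?_⟩
  by_cases hind : LinearIndependent ℝ ![Z', Z]
  · exact IsBNull.eq_of_linearIndependent hJ2 hJg hRpair hind hN hN'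
  · obtain ⟨a, rfl⟩ : ∃ a : ℝ, a • Z = Z' := by
      simpa [LinearIndependent.pair_symm_iff, LinearIndependent.pair_iff' hZ] using hind
    have ha : a ≠ 0 := by rintro rfl; simp at hZ'
    exact IsBNull.eq_of_self hJ2 hJg hZ hN (IsBNull.of_smul ha hN')

theorem stmt1 {V : Type*} [NormedAddCommGroup V] [InnerProductSpace ℝ V]
    [FiniteDimensional ℝ V] (m : ℕ) (hm : 2 ≤ m)
    (hdim : Module.finrank ℝ V = 2 * m)
    (J : V →ₗ[ℝ] V) (hJ2 : ∀ X, J (J X) = -X)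
    (hJg : ∀ X Y : V, (inner ℝ (J X) (J Y) : ℝ) = inner ℝ X Y)
    (R : V →ₗ[ℝ] V →ₗ[ℝ] V →ₗ[ℝ] V)
    (hRanti : ∀ X Y Z : V, R X Y Z = - R Y X Z)
    (hRskew : ∀ X Y Z W : V, (inner ℝ (R X Y Z) W : ℝ) = - inner ℝ (R X Y W) Z)
    (hRpair : ∀ X Y Z W : V, (inner ℝ (R X Y Z) W : ℝ) = inner ℝ (R Z W X) Y)
    (hRbianchi : ∀ X Y Z : V, R X Y Z + R Y Z X + R Z X Y = 0)
    (B B' : ℝ) (Z Z' : V) (hZ : Z ≠ 0) (hZ' : Z' ≠ 0)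
    (hN : ∀ X Y : V, R X Y Z + (4 * B) • chscK J X Y Z = 0)
    (hN' : ∀ X Y : V, R X Y Z' + (4 * B') • chscK J X Y Z' = 0) :
    (∀ W W' : V, LinearIndependent ℝ ![W, W'] → ∃ U, chscK J W W' U ≠ 0) ∧ B = B' :=
  stmt1_general J hJ2 hJg R hRpair B B' Z Z' hZ hZ' hN hN'
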